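/- For every n ∈ ℕ and every y ∈ ℝ, |H_n(y) e^{−y²/2}| ≤ c_n, where c_n = 2^{n/2} Γ((n+1)/2) / (√π · n!). (This is the uniform bound on Hermite functions obtained from their integral representation, used in the Watanabe-regularity estimates for stochastic currents.) -/

import Mathlib

/-! The Gaussian `e^{-t²/2}` is `√(2π)` times the Fourier transform of `e^{-2π²x²}`.
Differentiating `n` times under the Fourier integral and bounding the oscillating factor by `1`
gives `|(d/dt)ⁿ e^{-t²/2}| ≤ (2π)^{-1/2} ∫ |u|ⁿ e^{-u²/2} du`, the `n`-th absolute moment of the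
standard normal law, which equals `2^{n/2} Γ((n+1)/2) / √π`. -/

open MeasureTheory Real

/-- The normalized Hermite polynomial
`H_n(x) = ((−1)^n/n!) e^{x²/2} (d^n/dx^n) e^{−x²/2}`. -/
noncomputable def hermiteH (n : ℕ) (x : ℝ) : ℝ :=
  ((-1) ^ n / n.factorial) * Real.exp (x ^ 2 / 2) *
    iteratedDeriv n (fun y => Real.exp (-y ^ 2 / 2)) x

/-- The constant `c_n = 2^{n/2} Γ((n+1)/2) / (√π · n!)`. -/
noncomputable def hermiteBound (n : ℕ) : ℝ :=
  2 ^ ((n : ℝ) / 2) * Real.Gamma (((n : ℝ) + 1) / 2) / (Real.sqrt Real.pi * n.factorial)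

open FourierTransform

theorem ContinuousLinearMap.iteratedDeriv_comp_left {𝕜 E F : Type*} [NontriviallyNormedField 𝕜]
    [NormedAddCommGroup E] [NormedSpace 𝕜 E] [NormedAddCommGroup F] [NormedSpace 𝕜 F]
    (L : E →L[𝕜] F) {f : 𝕜 → E} {n : ℕ} {x : 𝕜} (hf : ContDiffAt 𝕜 n f x) :
    iteratedDeriv n (L ∘ f) x = L (iteratedDeriv n f x) := by
  simp only [iteratedDeriv_eq_iteratedFDeriv, L.iteratedFDeriv_comp_left hf le_rfl,
    ContinuousLinearMap.compContinuousMultilinearMap_coe, Function.comp_apply]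

theorem integrable_pow_mul_exp_neg_mul_sq {b : ℝ} (hb : 0 < b) (k : ℕ) :
    Integrable fun x : ℝ => x ^ k * rexp (-b * x ^ 2) := by
  simpa only [rpow_natCast] using
    integrable_rpow_mul_exp_neg_mul_sq hb (neg_one_lt_zero.trans_le k.cast_nonneg)

theorem integral_abs_pow_mul_exp_neg_sq_div_two (n : ℕ) :
    ∫ x : ℝ, |x| ^ n * rexp (-x ^ 2 / 2) = 2 ^ (((n : ℝ) + 1) / 2) * Gamma (((n : ℝ) + 1) / 2) := by
  have hmoment := integral_rpow_mul_exp_neg_mul_rpow two_pos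
    (neg_one_lt_zero.trans_le n.cast_nonneg) (one_half_pos (α := ℝ))
  simp only [rpow_natCast, rpow_two] at hmoment
  have habs : (fun x : ℝ => |x| ^ n * rexp (-x ^ 2 / 2))
      = fun x => (fun u : ℝ => u ^ n * rexp (-(1 / 2) * u ^ 2)) |x| := by
    ext x; dsimp only; rw [sq_abs]; ring_nf
  rw [habs, integral_comp_abs (f := fun u : ℝ => u ^ n * rexp (-(1 / 2) * u ^ 2)), hmoment,
    one_div, inv_rpow zero_le_two, ← rpow_neg zero_le_two, neg_div, neg_neg]
  ring

theorem norm_iteratedDeriv_fourier_le {E : Type*} [NormedAddCommGroup E] [NormedSpace ℂ E]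
    {f : ℝ → E} {n : ℕ} (hf : ∀ k ≤ n, Integrable fun x : ℝ => x ^ k • f x) (y : ℝ) :
    ‖iteratedDeriv n (𝓕 f) y‖ ≤ ∫ x, (2 * π * |x|) ^ n * ‖f x‖ := by
  rw [iteratedDeriv_fourier (N := n) (fun k hk => hf k (by exact_mod_cast hk)) le_rfl]
  refine (VectorFourier.norm_fourierIntegral_le_integral_norm _ _ _ _ _).trans_eq ?_
  refine integral_congr_ae (Filter.Eventually.of_forall fun x => ?_)
  simp [norm_smul, abs_of_pos pi_pos]

theorem ofReal_exp_neg_sq_div_two_eq_fourier :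
    (fun t : ℝ => ((rexp (-t ^ 2 / 2) : ℝ) : ℂ))
      = fun t => (√(2 * π) : ℂ) * 𝓕 (fun x : ℝ => ((rexp (-(2 * π ^ 2) * x ^ 2) : ℝ) : ℂ)) t := by
  have hre : 0 < (2 * π : ℂ).re := by simpa using pi_pos
  have hgauss : (fun x : ℝ => ((rexp (-(2 * π ^ 2) * x ^ 2) : ℝ) : ℂ))
      = fun x : ℝ => Complex.exp (-π * (2 * π) * x ^ 2) := by
    ext x; push_cast; ring_nf
  have hsqrt : (2 * π : ℂ) ^ (1 / 2 : ℂ) = (√(2 * π) : ℂ) := by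
    rw [sqrt_eq_rpow, Complex.ofReal_cpow (by positivity)]; push_cast; ring_nf
  ext t
  rw [hgauss, fourier_gaussian_pi hre, hsqrt]
  push_cast
  field_simp

theorem abs_iteratedDeriv_exp_neg_sq_div_two_le (n : ℕ) (y : ℝ) :
    |iteratedDeriv n (fun t => rexp (-t ^ 2 / 2)) y|
      ≤ 2 ^ ((n : ℝ) / 2) * Gamma (((n : ℝ) + 1) / 2) / √π := by
  set f : ℝ → ℂ := fun x => ((rexp (-(2 * π ^ 2) * x ^ 2) : ℝ) : ℂ)
  have hf : ∀ k ≤ n, Integrable fun x : ℝ => x ^ k • f x := fun k _ => by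
    have hreal := integrable_pow_mul_exp_neg_mul_sq (b := 2 * π ^ 2) (by positivity) k
    refine (hreal.ofReal (𝕜 := ℂ)).congr (Filter.Eventually.of_forall fun x => ?_)
    simp [f, Complex.real_smul]
  have hg : ContDiffAt ℝ n (fun t => rexp (-t ^ 2 / 2)) y := by fun_prop
  have hsubst : ∫ x, (2 * π * |x|) ^ n * ‖f x‖
      = (2 * π)⁻¹ * ∫ u : ℝ, |u| ^ n * rexp (-u ^ 2 / 2) := by
    have h2π : (0 : ℝ) < 2 * π := by positivity
    have hcomp := Measure.integral_comp_mul_left (fun u : ℝ => |u| ^ n * rexp (-u ^ 2 / 2)) (2 * π)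
    rw [abs_of_pos (inv_pos.mpr h2π), smul_eq_mul] at hcomp
    rw [← hcomp]
    refine integral_congr_ae (Filter.Eventually.of_forall fun x => ?_)
    simp only [f, Complex.norm_real, norm_eq_abs, abs_exp, abs_mul, abs_of_pos h2π]
    ring_nf
  calc |iteratedDeriv n (fun t => rexp (-t ^ 2 / 2)) y|
      = ‖iteratedDeriv n (Complex.ofRealCLM ∘ fun t => rexp (-t ^ 2 / 2)) y‖ := by
        rw [Complex.ofRealCLM.iteratedDeriv_comp_left hg]; simp
    _ = √(2 * π) * ‖iteratedDeriv n (𝓕 f) y‖ := by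
        simp only [Function.comp_def, Complex.ofRealCLM_apply]
        rw [ofReal_exp_neg_sq_div_two_eq_fourier, iteratedDeriv_const_mul_field, norm_mul,
          Complex.norm_real, norm_of_nonneg (sqrt_nonneg _)]
    _ ≤ √(2 * π) * ∫ x, (2 * π * |x|) ^ n * ‖f x‖ := by
        gcongr; exact norm_iteratedDeriv_fourier_le hf y
    _ = 2 ^ ((n : ℝ) / 2) * Gamma (((n : ℝ) + 1) / 2) / √π := by
        rw [hsubst, integral_abs_pow_mul_exp_neg_sq_div_two, add_div, rpow_add two_pos,
          ← sqrt_eq_rpow, sqrt_mul zero_le_two]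
        field_simp
        rw [sq_sqrt zero_le_two, sq_sqrt pi_pos.le]

theorem hermiteH_mul_exp_neg_sq_div_two (n : ℕ) (x : ℝ) :
    hermiteH n x * rexp (-x ^ 2 / 2)
      = (-1) ^ n / n.factorial * iteratedDeriv n (fun y => rexp (-y ^ 2 / 2)) x := by
  have hexp : rexp (x ^ 2 / 2) * rexp (-x ^ 2 / 2) = 1 := by
    rw [← exp_add, neg_div, add_neg_cancel, exp_zero]
  rw [hermiteH]
  linear_combination (-1) ^ n / n.factorial * iteratedDeriv n (fun y => rexp (-y ^ 2 / 2)) x * hexp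

/-- uniform bound on Hermite functions: `|H_n(y) e^{−y²/2}| ≤ c_n`. -/
theorem hermite_function_uniform_bound (n : ℕ) (y : ℝ) :
    |hermiteH n y * Real.exp (-y ^ 2 / 2)| ≤ hermiteBound n := by
  rw [hermiteH_mul_exp_neg_sq_div_two, abs_mul, abs_div, abs_pow, abs_neg, abs_one, one_pow,
    Nat.abs_cast, one_div_mul_eq_div, hermiteBound, ← div_div]
  gcongr
  exact abs_iteratedDeriv_exp_neg_sq_div_two_le n y
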